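/- Expansion-coefficient bound on the asymptotic twisted eigenvalue: let D, d ≥ 1, let Φ be a unital CP map on D×D complex matrices with Kraus operators K : Fin d → Matrix (Fin D) (Fin D) ℂ (∑_a (K a) * (K a)ᴴ = 1), let Λ be a positive-definite D×D matrix with trace Λ = 1 and ∑_a (K a)ᴴ * Λ * (K a) = Λ, let λ > 0 be such that Λ − λ•1 is positive semidefinite, and let κ ≥ 0 satisfy ‖Φ(X) − (trace(Λ * X)) • 1‖_F ≤ κ · ‖X‖_F for all D×D matrices X, where ‖M‖_F = Real.sqrt((trace(Mᴴ * M)).re) is the Frobenius norm. Set t̂ = (trace((Λ ⊗ₖ Λ) * (Φ⊗Φ)(𝔰) * 𝔰)).re and q = (trace(Λ * Λ)).re. Then t̂ ≤ 1 − λ² · D² · ( 1 − q/D − κ·(κ + 2·(q/D − 1/D²)) ). -/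

import Mathlib

open Matrix
open scoped Kronecker ComplexOrder

/-- The swap matrix on `Fin D × Fin D`. -/
def swapMatrix (D : ℕ) : Matrix (Fin D × Fin D) (Fin D × Fin D) ℂ :=
  fun p q => if p.1 = q.2 ∧ p.2 = q.1 then 1 else 0

/-- The tensor square `Φ ⊗ Φ` of the CP map with Kraus operators `K`. -/
noncomputable def tensorSqCP {D d : ℕ} (K : Fin d → Matrix (Fin D) (Fin D) ℂ)
    (M : Matrix (Fin D × Fin D) (Fin D × Fin D) ℂ) :
    Matrix (Fin D × Fin D) (Fin D × Fin D) ℂ :=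
  ∑ a : Fin d × Fin d, (K a.1 ⊗ₖ K a.2) * M * (K a.1 ⊗ₖ K a.2)ᴴ

/-- The Frobenius (Hilbert–Schmidt) norm of a complex matrix. -/
noncomputable def frobNorm {n : Type*} [Fintype n] [DecidableEq n]
    (M : Matrix n n ℂ) : ℝ :=
  Real.sqrt (((Mᴴ * M).trace).re)

/-!
Write `G a b = tr (K aᴴ Λ K b)` and `S a b = tr (K aᴴ K b)`. The swap trick turns `t̂` into
`∑ |G a b|²`, while `∑ G a a = tr Λ = 1` and `∑ S a a = D`, so `1 - t̂` and `D² - ∑ |S a b|²` are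
sums of 2×2 Gram determinants. Since `Λ = λ 1 + P` with `P ≥ 0`, each determinant for `G` is at
least `λ²` times the one for `S`.

It remains to bound `∑ |S a b|²`, which equals `∑ i j, ‖Φ (E i j)‖_F²` (the Frobenius norm of the
Choi matrix). Splitting `Φ X = tr (Λ X) • 1 + R X`, the hypothesis gives `‖R (E i j)‖_F ≤ κ`, and
the cross term is `2 Re tr (R Λ)`. Now `R 1 = 0` (unitality) and `tr (Λ R X) = 0` (`Λ` is a fixed
point of `Φ*`), so `q D tr (R Λ) = ⟪q 1 - Λ, R (D Λ - 1)⟫`, and Cauchy–Schwarz together with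
`‖q 1 - Λ‖² = q (D q - 1)`, `‖D Λ - 1‖² = D (D q - 1)` gives `|tr (R Λ)| ≤ κ (D q - 1)`.
-/

open Finset

section Frobenius

variable {n : Type*} [Fintype n]

lemma re_trace_conjTranspose_mul_mul_nonneg {M : Matrix n n ℂ} (hM : M.PosSemidef)
    (X : Matrix n n ℂ) : 0 ≤ (Xᴴ * M * X).trace.re :=
  (Complex.nonneg_iff.mp (hM.conjTranspose_mul_mul_same X).trace_nonneg).1

lemma norm_trace_conjTranspose_mul_mul_sq_le {M : Matrix n n ℂ} (hM : M.PosSemidef)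
    (X Y : Matrix n n ℂ) :
    ‖(Xᴴ * M * Y).trace‖ ^ 2 ≤ (Xᴴ * M * X).trace.re * (Yᴴ * M * Y).trace.re := by
  let := M.toMatrixSeminormedAddCommGroup hM
  let := M.toMatrixInnerProductSpace hM
  have h := inner_mul_inner_self_le (𝕜 := ℂ) Yᴴ Xᴴ
  have e : ∀ A B : Matrix n n ℂ, (inner ℂ Aᴴ Bᴴ : ℂ) = (Bᴴ * M * A).trace := fun A B => by
    change (Bᴴ * M * Aᴴᴴ).trace = _
    rw [conjTranspose_conjTranspose]
  rw [norm_inner_symm Xᴴ Yᴴ, e, e, e] at h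
  simpa [sq, mul_comm] using h

variable [DecidableEq n]

lemma norm_trace_conjTranspose_mul_sq_le (X Y : Matrix n n ℂ) :
    ‖(Xᴴ * Y).trace‖ ^ 2 ≤ (Xᴴ * X).trace.re * (Yᴴ * Y).trace.re := by
  simpa using norm_trace_conjTranspose_mul_mul_sq_le PosSemidef.one X Y

lemma frobNorm_sq (A : Matrix n n ℂ) : frobNorm A ^ 2 = (Aᴴ * A).trace.re :=
  Real.sq_sqrt (by simpa using re_trace_conjTranspose_mul_mul_nonneg PosSemidef.one A)

lemma re_trace_le_sq_mul_of_frobNorm_le {A B : Matrix n n ℂ} {κ : ℝ}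
    (h : frobNorm A ≤ κ * frobNorm B) : (Aᴴ * A).trace.re ≤ κ ^ 2 * (Bᴴ * B).trace.re := by
  rw [← frobNorm_sq, ← frobNorm_sq, ← mul_pow]
  exact pow_le_pow_left₀ (Real.sqrt_nonneg _) h 2

lemma one_le_card_mul_re_trace_mul_self {Λ : Matrix n n ℂ} (hΛ : Λ.IsHermitian)
    (hΛtr : Λ.trace = 1) : 1 ≤ Fintype.card n * (Λ * Λ).trace.re := by
  simpa [hΛtr, hΛ.eq] using norm_trace_conjTranspose_mul_sq_le 1 Λ

lemma re_trace_conjTranspose_mul_self_smul_one_add (c : ℂ) (R : Matrix n n ℂ) :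
    ((c • 1 + R)ᴴ * (c • 1 + R)).trace.re
      = ‖c‖ ^ 2 * Fintype.card n + 2 * (star c * R.trace).re + (Rᴴ * R).trace.re := by
  have h : (c * Rᴴ.trace).re = (starRingEnd ℂ c * R.trace).re := by
    rw [trace_conjTranspose, Complex.star_def, ← Complex.conj_re, map_mul, Complex.conj_conj]
  simp only [conjTranspose_add, conjTranspose_smul, conjTranspose_one, Matrix.add_mul,
    Matrix.smul_mul, Matrix.mul_smul, Matrix.one_mul, Matrix.mul_one,
    trace_add, trace_smul, trace_one, smul_eq_mul, Complex.star_def, mul_add, Complex.add_re,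
    ← mul_assoc, Complex.mul_conj', h]
  rw [← Complex.ofReal_pow, ← Complex.ofReal_natCast, ← Complex.ofReal_mul, Complex.ofReal_re]
  ring

lemma sum_sum_star_trace_mul_single_smul {M : Type*} [AddCommGroup M] [Module ℂ M]
    (f : Matrix n n ℂ →ₗ[ℂ] M) (A : Matrix n n ℂ) :
    ∑ i, ∑ j, star (A * single i j 1).trace • f (single i j 1) = f Aᴴ := by
  conv_rhs => rw [matrix_eq_sum_single Aᴴ]
  simp [map_sum, trace_mul_single, ← map_smul, smul_single]

end Frobenius

section Swap

variable {D : ℕ}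

lemma swapMatrix_eq_toMatrix_prodComm :
    swapMatrix D = (Equiv.prodComm (Fin D) (Fin D)).toPEquiv.toMatrix := by
  ext ⟨i, j⟩ ⟨k, l⟩
  simp [swapMatrix, PEquiv.toMatrix_apply, Prod.ext_iff, and_comm]

lemma swapMatrix_mul_kronecker_mul_swapMatrix (A B : Matrix (Fin D) (Fin D) ℂ) :
    swapMatrix D * (A ⊗ₖ B) * swapMatrix D = B ⊗ₖ A := by
  rw [swapMatrix_eq_toMatrix_prodComm, PEquiv.toMatrix_toPEquiv_mul,
    PEquiv.mul_toMatrix_toPEquiv]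
  ext ⟨i, j⟩ ⟨k, l⟩
  simp [mul_comm]

lemma trace_kronecker_mul_conj_swapMatrix_mul_swapMatrix (Λ A B : Matrix (Fin D) (Fin D) ℂ) :
    ((Λ ⊗ₖ Λ) * ((A ⊗ₖ B) * swapMatrix D * (A ⊗ₖ B)ᴴ) * swapMatrix D).trace
      = (Λ * A * Bᴴ).trace * (Λ * B * Aᴴ).trace := by
  have : (Λ ⊗ₖ Λ) * ((A ⊗ₖ B) * swapMatrix D * (A ⊗ₖ B)ᴴ) * swapMatrix D
      = (Λ ⊗ₖ Λ) * (A ⊗ₖ B) * (swapMatrix D * (Aᴴ ⊗ₖ Bᴴ) * swapMatrix D) := by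
    rw [conjTranspose_kronecker]
    simp only [Matrix.mul_assoc]
  rw [this, swapMatrix_mul_kronecker_mul_swapMatrix, ← mul_kronecker_mul, ← mul_kronecker_mul,
    trace_kronecker]

lemma re_trace_kronecker_mul_tensorSqCP_swapMatrix_mul_swapMatrix {d : ℕ}
    (K : Fin d → Matrix (Fin D) (Fin D) ℂ) {Λ : Matrix (Fin D) (Fin D) ℂ} (hΛ : Λ.IsHermitian) :
    ((Λ ⊗ₖ Λ) * tensorSqCP K (swapMatrix D) * swapMatrix D).trace.re
      = ∑ a, ∑ b, ‖((K a)ᴴ * Λ * K b).trace‖ ^ 2 := by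
  simp only [tensorSqCP, mul_sum, sum_mul, trace_sum, Complex.re_sum, Fintype.sum_prod_type,
    trace_kronecker_mul_conj_swapMatrix_mul_swapMatrix]
  refine sum_congr rfl fun a _ => sum_congr rfl fun b _ => ?_
  have h₁ : (Λ * K b * (K a)ᴴ).trace = ((K a)ᴴ * Λ * K b).trace := trace_mul_cycle _ _ _
  have h₂ : (Λ * K a * (K b)ᴴ).trace = star ((K a)ᴴ * Λ * K b).trace := by
    rw [← trace_conjTranspose, conjTranspose_mul, conjTranspose_mul, conjTranspose_conjTranspose,
      hΛ.eq, trace_mul_cycle, Matrix.mul_assoc]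
  rw [h₁, h₂, Complex.star_def, Complex.conj_mul', ← Complex.ofReal_pow, Complex.ofReal_re]

end Swap

lemma sq_mul_det_le_det_add {lam s₁ s₂ p₁ p₂ u v w : ℝ} (hlam : 0 ≤ lam) (hs₁ : 0 ≤ s₁)
    (hs₂ : 0 ≤ s₂) (hp₁ : 0 ≤ p₁) (hp₂ : 0 ≤ p₂) (hu : 0 ≤ u) (hv : 0 ≤ v)
    (hus : u ^ 2 ≤ s₁ * s₂) (hvp : v ^ 2 ≤ p₁ * p₂) (hw : 0 ≤ w) (hwuv : w ≤ lam * u + v) :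
    lam ^ 2 * (s₁ * s₂ - u ^ 2) ≤ (lam * s₁ + p₁) * (lam * s₂ + p₂) - w ^ 2 := by
  have amgm : 2 * (u * v) ≤ s₁ * p₂ + p₁ * s₂ := by
    refine (pow_le_pow_iff_left₀ (by positivity) (by positivity) two_ne_zero).mp ?_
    nlinarith [sq_nonneg (s₁ * p₂ - p₁ * s₂), mul_le_mul hus hvp (sq_nonneg v) (by positivity)]
  nlinarith [mul_le_mul_of_nonneg_left amgm hlam, mul_self_le_mul_self hw hwuv]

lemma sq_sum_sub_sum_sum {ι R : Type*} [Fintype ι] [CommRing R] (x : ι → R) (y : ι → ι → R) :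
    (∑ a, x a) ^ 2 - ∑ a, ∑ b, y a b = ∑ a, ∑ b, (x a * x b - y a b) := by
  simp only [sq, sum_mul_sum, sum_sub_distrib]

section Gram

variable {n : Type*} [Fintype n] [DecidableEq n] {Λ : Matrix n n ℂ} {lam : ℝ}

lemma sq_mul_gram_det_le (hlam : 0 ≤ lam) (hgap : (Λ - (lam : ℂ) • 1).PosSemidef)
    (X Y : Matrix n n ℂ) :
    lam ^ 2 * ((Xᴴ * X).trace.re * (Yᴴ * Y).trace.re - ‖(Xᴴ * Y).trace‖ ^ 2)
      ≤ (Xᴴ * Λ * X).trace.re * (Yᴴ * Λ * Y).trace.re - ‖(Xᴴ * Λ * Y).trace‖ ^ 2 := by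
  set P := Λ - (lam : ℂ) • 1
  have hsplit : ∀ A B : Matrix n n ℂ,
      (Aᴴ * Λ * B).trace = lam * (Aᴴ * B).trace + (Aᴴ * P * B).trace := fun A B => by
    simp [P, Matrix.mul_sub, Matrix.sub_mul, trace_sub]
  simp only [hsplit, Complex.add_re, Complex.re_ofReal_mul]
  refine sq_mul_det_le_det_add hlam
    (re_trace_conjTranspose_mul_mul_nonneg PosSemidef.one X |>.trans_eq (by simp))
    (re_trace_conjTranspose_mul_mul_nonneg PosSemidef.one Y |>.trans_eq (by simp))
    (re_trace_conjTranspose_mul_mul_nonneg hgap X) (re_trace_conjTranspose_mul_mul_nonneg hgap Y)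
    (norm_nonneg _) (norm_nonneg _) (norm_trace_conjTranspose_mul_sq_le X Y)
    (norm_trace_conjTranspose_mul_mul_sq_le hgap X Y) (norm_nonneg _) ?_
  refine (norm_add_le _ _).trans_eq ?_
  rw [norm_mul, Complex.norm_real, Real.norm_of_nonneg hlam]

lemma sq_mul_gram_defect_le {ι : Type*} [Fintype ι] (hlam : 0 ≤ lam)
    (hgap : (Λ - (lam : ℂ) • 1).PosSemidef) (K : ι → Matrix n n ℂ) :
    lam ^ 2 * ((∑ a, ((K a)ᴴ * K a).trace.re) ^ 2 - ∑ a, ∑ b, ‖((K a)ᴴ * K b).trace‖ ^ 2)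
      ≤ (∑ a, ((K a)ᴴ * Λ * K a).trace.re) ^ 2 - ∑ a, ∑ b, ‖((K a)ᴴ * Λ * K b).trace‖ ^ 2 := by
  rw [sq_sum_sub_sum_sum, sq_sum_sub_sum_sum, mul_sum]
  exact sum_le_sum fun a _ => (mul_sum _ _ _).trans_le <|
    sum_le_sum fun b _ => sq_mul_gram_det_le hlam hgap (K a) (K b)

end Gram

section Kraus

variable {n ι : Type*} [Fintype n] [Fintype ι]

def krausMap (K : ι → Matrix n n ℂ) : Matrix n n ℂ →ₗ[ℂ] Matrix n n ℂ where
  toFun X := ∑ a, K a * X * (K a)ᴴ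
  map_add' X Y := by simp only [Matrix.mul_add, Matrix.add_mul, sum_add_distrib]
  map_smul' c X := by simp [smul_sum]

lemma krausMap_apply (K : ι → Matrix n n ℂ) (X : Matrix n n ℂ) :
    krausMap K X = ∑ a, K a * X * (K a)ᴴ := rfl

variable [DecidableEq n]

def expansionResidual (K : ι → Matrix n n ℂ) (Λ : Matrix n n ℂ) :
    Matrix n n ℂ →ₗ[ℂ] Matrix n n ℂ :=
  krausMap K - (traceLinearMap n ℂ ℂ ∘ₗ LinearMap.mulLeft ℂ Λ).smulRight 1

lemma expansionResidual_apply (K : ι → Matrix n n ℂ) (Λ X : Matrix n n ℂ) :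
    expansionResidual K Λ X = krausMap K X - (Λ * X).trace • 1 := rfl

lemma sum_sum_norm_trace_conjTranspose_mul_sq_eq_krausMap_single (K : ι → Matrix n n ℂ) :
    ∑ a, ∑ b, ‖((K a)ᴴ * K b).trace‖ ^ 2
      = ∑ i, ∑ j, ((krausMap K (single i j 1))ᴴ * krausMap K (single i j 1)).trace.re := by
  have entry : ∀ a b i j, ((K a * single i j 1 * (K a)ᴴ)ᴴ * (K b * single i j 1 * (K b)ᴴ)).trace
      = ((K a)ᴴ * K b) i i * ((K b)ᴴ * K a) j j := fun a b i j => by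
    calc _ = (single j i 1 * ((K a)ᴴ * K b) * single i j 1 * ((K b)ᴴ * K a)).trace := by
          simp only [conjTranspose_mul, conjTranspose_conjTranspose, conjTranspose_single,
            star_one, Matrix.mul_assoc]
          rw [trace_mul_comm]
          simp only [Matrix.mul_assoc]
      _ = _ := by rw [single_mul_mul_single, trace_single_mul]; simp
  have diag : ∀ a b, ∑ i, ∑ j, ((K a)ᴴ * K b) i i * ((K b)ᴴ * K a) j j
      = ((‖((K a)ᴴ * K b).trace‖ ^ 2 : ℝ) : ℂ) := fun a b => by
    have hstar : ((K b)ᴴ * K a).trace = star ((K a)ᴴ * K b).trace := by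
      rw [← trace_conjTranspose, conjTranspose_mul, conjTranspose_conjTranspose]
    rw [← sum_mul_sum, Complex.ofReal_pow, ← Complex.mul_conj', ← Complex.star_def, ← hstar]
    rfl
  simp only [krausMap_apply, conjTranspose_sum, sum_mul, mul_sum, trace_sum, entry,
    Complex.re_sum, sum_comm (γ := n) (α := ι)]
  rw [sum_comm]
  simp only [← Complex.re_sum, diag, Complex.ofReal_re]

variable {K : ι → Matrix n n ℂ} {Λ : Matrix n n ℂ} {κ : ℝ}

lemma expansionResidual_one (hunital : ∑ a, K a * (K a)ᴴ = 1) (hΛtr : Λ.trace = 1) :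
    expansionResidual K Λ 1 = 0 := by
  simp [expansionResidual_apply, krausMap_apply, hunital, hΛtr]

lemma trace_mul_expansionResidual (hfix : ∑ a, (K a)ᴴ * Λ * K a = Λ) (hΛtr : Λ.trace = 1)
    (X : Matrix n n ℂ) : (Λ * expansionResidual K Λ X).trace = 0 := by
  have hcycle : ∀ a, (Λ * (K a * X * (K a)ᴴ)).trace = ((K a)ᴴ * Λ * K a * X).trace := fun a => by
    rw [← Matrix.mul_assoc, ← Matrix.mul_assoc, trace_mul_cycle, Matrix.mul_assoc _ Λ]
  rw [expansionResidual_apply, krausMap_apply, Matrix.mul_sub, mul_sum, trace_sub, trace_sum,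
    sum_congr rfl fun a _ => hcycle a, ← trace_sum, ← sum_mul, hfix, Matrix.mul_smul, mul_one,
    trace_smul, hΛtr, smul_eq_mul, mul_one, sub_self]

lemma norm_trace_expansionResidual_le (hunital : ∑ a, K a * (K a)ᴴ = 1)
    (hΛ : Λ.IsHermitian) (hΛtr : Λ.trace = 1) (hfix : ∑ a, (K a)ᴴ * Λ * K a = Λ) (hκ : 0 ≤ κ)
    (hexp : ∀ X, frobNorm (expansionResidual K Λ X) ≤ κ * frobNorm X) :
    ‖(expansionResidual K Λ Λ).trace‖
      ≤ κ * (Fintype.card n * (Λ * Λ).trace.re - 1) := by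
  set D : ℝ := (Fintype.card n : ℝ)
  set q : ℝ := (Λ * Λ).trace.re
  set R := expansionResidual K Λ
  have hDq : 1 ≤ D * q := one_le_card_mul_re_trace_mul_self hΛ hΛtr
  have hD : 0 ≤ D := Nat.cast_nonneg _
  have hq : 0 ≤ q := by nlinarith
  have hqc : (Λ * Λ).trace = q := by
    have h := (posSemidef_conjTranspose_mul_self Λ).trace_nonneg
    rw [hΛ.eq] at h
    exact Complex.ext rfl (Complex.nonneg_iff.mp h).2.symm
  set U : Matrix n n ℂ := (q : ℂ) • 1 + -Λ
  set X : Matrix n n ℂ := (-1 : ℂ) • 1 + (D : ℂ) • Λ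
  have hRX : R X = (D : ℂ) • R Λ := by
    have hR1 : R 1 = 0 := expansionResidual_one hunital hΛtr
    simp [X, hR1]
  have hUR : (Uᴴ * R X).trace = q * D * (R Λ).trace := by
    simp [U, hRX, hΛ.eq, Matrix.add_mul, trace_add, trace_mul_expansionResidual hfix hΛtr, R]
    ring
  have hUU : (Uᴴ * U).trace.re = q * (D * q - 1) := by
    rw [re_trace_conjTranspose_mul_self_smul_one_add]
    simp [hΛ.eq, hΛtr, hqc, abs_of_nonneg hq]
    ring
  have hXX : (Xᴴ * X).trace.re = D * (D * q - 1) := by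
    rw [re_trace_conjTranspose_mul_self_smul_one_add]
    simp [hΛ.eq, hΛtr, hqc, trace_smul, D]
    ring
  have hcs := norm_trace_conjTranspose_mul_sq_le U (R X)
  have hRXX := re_trace_le_sq_mul_of_frobNorm_le (hexp X)
  rw [hUR, hUU, norm_mul, norm_mul, Complex.norm_real, Complex.norm_real, Real.norm_of_nonneg hq,
    Real.norm_of_nonneg hD] at hcs
  rw [hXX] at hRXX
  have hbound : D * q * ‖(R Λ).trace‖ ^ 2 ≤ (κ * (D * q - 1)) ^ 2 := by
    refine le_of_mul_le_mul_left ?_ (by linarith : 0 < D * q)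
    nlinarith [mul_le_mul_of_nonneg_left hRXX (by nlinarith : 0 ≤ q * (D * q - 1))]
  refine (pow_le_pow_iff_left₀ (norm_nonneg _) (mul_nonneg hκ (by linarith)) two_ne_zero).mp ?_
  nlinarith [sq_nonneg ‖(R Λ).trace‖]

lemma sum_sum_norm_trace_conjTranspose_mul_sq_le (hunital : ∑ a, K a * (K a)ᴴ = 1)
    (hΛ : Λ.IsHermitian) (hΛtr : Λ.trace = 1) (hfix : ∑ a, (K a)ᴴ * Λ * K a = Λ) (hκ : 0 ≤ κ)
    (hexp : ∀ X, frobNorm (expansionResidual K Λ X) ≤ κ * frobNorm X) :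
    ∑ a, ∑ b, ‖((K a)ᴴ * K b).trace‖ ^ 2
      ≤ Fintype.card n * (Λ * Λ).trace.re
        + 2 * (κ * (Fintype.card n * (Λ * Λ).trace.re - 1))
        + (Fintype.card n : ℝ) ^ 2 * κ ^ 2 := by
  set R := expansionResidual K Λ
  have hdecomp : ∀ i j, krausMap K (single i j 1)
      = (Λ * single i j 1).trace • 1 + R (single i j 1) := fun i j => (add_sub_cancel _ _).symm
  have hsmall : ∀ i j, ((R (single i j 1))ᴴ * R (single i j 1)).trace.re ≤ κ ^ 2 := by
    intro i j
    simpa using re_trace_le_sq_mul_of_frobNorm_le (hexp (single i j 1))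
  have hsq : ∑ i, ∑ j, ‖(Λ * single i j 1).trace‖ ^ 2 = (Λ * Λ).trace.re := by
    have h := sum_sum_star_trace_mul_single_smul (traceLinearMap n ℂ ℂ ∘ₗ LinearMap.mulLeft ℂ Λ) Λ
    simp only [LinearMap.comp_apply, LinearMap.mulLeft_apply, traceLinearMap_apply, smul_eq_mul,
      Complex.star_def, Complex.conj_mul', hΛ.eq] at h
    rw [← h]
    simp only [Complex.re_sum, ← Complex.ofReal_pow, Complex.ofReal_re]
  have hcross : ∑ i, ∑ j, (star (Λ * single i j 1).trace * (R (single i j 1)).trace).re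
      = (R Λ).trace.re := by
    have h := sum_sum_star_trace_mul_single_smul (traceLinearMap n ℂ ℂ ∘ₗ R) Λ
    simp only [LinearMap.comp_apply, traceLinearMap_apply, smul_eq_mul, hΛ.eq] at h
    rw [← h]
    simp only [Complex.re_sum]
  rw [sum_sum_norm_trace_conjTranspose_mul_sq_eq_krausMap_single]
  simp only [hdecomp, re_trace_conjTranspose_mul_self_smul_one_add, sum_add_distrib, ← sum_mul,
    ← mul_sum, hsq, hcross]
  have h₁ : (R Λ).trace.re ≤ κ * (Fintype.card n * (Λ * Λ).trace.re - 1) :=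
    (Complex.re_le_norm _).trans (norm_trace_expansionResidual_le hunital hΛ hΛtr hfix hκ hexp)
  have h₂ : ∑ i, ∑ j, ((R (single i j 1))ᴴ * R (single i j 1)).trace.re
      ≤ (Fintype.card n : ℝ) ^ 2 * κ ^ 2 :=
    (sum_le_sum fun i _ => sum_le_sum fun j _ => hsmall i j).trans_eq (by simp; ring)
  linarith

end Kraus

theorem twisted_eigenvalue_expansion_bound_general
    (D d : ℕ) (hD : 1 ≤ D)
    (K : Fin d → Matrix (Fin D) (Fin D) ℂ)
    (hunital : ∑ a, K a * (K a)ᴴ = (1 : Matrix (Fin D) (Fin D) ℂ))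
    (Λ : Matrix (Fin D) (Fin D) ℂ) (hΛ : Λ.PosDef) (hΛtr : Λ.trace = 1)
    (hfix : ∑ a, (K a)ᴴ * Λ * K a = Λ)
    (lam : ℝ) (hlam : 0 < lam)
    (hgap : (Λ - (lam : ℂ) • (1 : Matrix (Fin D) (Fin D) ℂ)).PosSemidef)
    (κ : ℝ) (hκ : 0 ≤ κ)
    (hexp : ∀ X : Matrix (Fin D) (Fin D) ℂ,
      frobNorm ((∑ a, K a * X * (K a)ᴴ) - ((Λ * X).trace) • (1 : Matrix (Fin D) (Fin D) ℂ))
        ≤ κ * frobNorm X) :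
    (((Λ ⊗ₖ Λ) * tensorSqCP K (swapMatrix D) * swapMatrix D).trace).re ≤
      1 - lam ^ 2 * (D : ℝ) ^ 2 *
        (1 - ((Λ * Λ).trace).re / (D : ℝ)
          - κ * (κ + 2 * (((Λ * Λ).trace).re / (D : ℝ) - 1 / (D : ℝ) ^ 2))) := by
  have hΛh : Λ.IsHermitian := hΛ.isHermitian
  have hkraus : ∑ a, ((K a)ᴴ * K a).trace.re = D := by
    simp_rw [← Complex.re_sum, trace_mul_comm (K _)ᴴ]
    rw [← trace_sum, hunital, trace_one, Fintype.card_fin, Complex.natCast_re]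
  have hweight : ∑ a, ((K a)ᴴ * Λ * K a).trace.re = 1 := by
    rw [← Complex.re_sum, ← trace_sum, hfix, hΛtr, Complex.one_re]
  have hgram := sq_mul_gram_defect_le hlam.le hgap K
  have hchoi := sum_sum_norm_trace_conjTranspose_mul_sq_le hunital hΛh hΛtr hfix hκ hexp
  rw [hkraus, hweight, one_pow] at hgram
  rw [Fintype.card_fin] at hchoi
  rw [re_trace_kronecker_mul_tensorSqCP_swapMatrix_mul_swapMatrix K hΛh]
  have hD0 : (D : ℝ) ≠ 0 := Nat.cast_ne_zero.mpr (by omega)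
  calc _ ≤ 1 - lam ^ 2 * ((D : ℝ) ^ 2 - ∑ a, ∑ b, ‖((K a)ᴴ * K b).trace‖ ^ 2) := by linarith
    _ ≤ 1 - lam ^ 2 * ((D : ℝ) ^ 2 - (D * (Λ * Λ).trace.re
          + 2 * (κ * (D * (Λ * Λ).trace.re - 1)) + (D : ℝ) ^ 2 * κ ^ 2)) := by gcongr
    _ = _ := by field_simp; ring

/-- Expansion-coefficient bound on the asymptotic twisted eigenvalue: for a unital CP map `Φ`
with full-rank adjoint fixed point `Λ ≥ λ • 1 > 0`, and `κ ≥ 0` bounding the expansion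
`‖Φ(X) - trace(Λ X) • 1‖_F ≤ κ ‖X‖_F`, the quantity
`t̂ = (trace ((Λ ⊗ₖ Λ) * (Φ⊗Φ)(𝔰) * 𝔰)).re` satisfies
`t̂ ≤ 1 - λ² D² (1 - q/D - κ (κ + 2 (q/D - 1/D²)))` with `q = (trace (Λ * Λ)).re`. -/
theorem twisted_eigenvalue_expansion_bound
    (D d : ℕ) (hD : 1 ≤ D) (hd : 1 ≤ d)
    (K : Fin d → Matrix (Fin D) (Fin D) ℂ)
    (hunital : ∑ a, K a * (K a)ᴴ = (1 : Matrix (Fin D) (Fin D) ℂ))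
    (Λ : Matrix (Fin D) (Fin D) ℂ) (hΛ : Λ.PosDef) (hΛtr : Λ.trace = 1)
    (hfix : ∑ a, (K a)ᴴ * Λ * K a = Λ)
    (lam : ℝ) (hlam : 0 < lam)
    (hgap : (Λ - (lam : ℂ) • (1 : Matrix (Fin D) (Fin D) ℂ)).PosSemidef)
    (κ : ℝ) (hκ : 0 ≤ κ)
    (hexp : ∀ X : Matrix (Fin D) (Fin D) ℂ,
      frobNorm ((∑ a, K a * X * (K a)ᴴ) - ((Λ * X).trace) • (1 : Matrix (Fin D) (Fin D) ℂ))
        ≤ κ * frobNorm X) :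
    (((Λ ⊗ₖ Λ) * tensorSqCP K (swapMatrix D) * swapMatrix D).trace).re ≤
      1 - lam ^ 2 * (D : ℝ) ^ 2 *
        (1 - ((Λ * Λ).trace).re / (D : ℝ)
          - κ * (κ + 2 * (((Λ * Λ).trace).re / (D : ℝ) - 1 / (D : ℝ) ^ 2))) :=
  twisted_eigenvalue_expansion_bound_general D d hD K hunital Λ hΛ hΛtr hfix lam hlam hgap κ hκ hexp
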